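/- arXiv:0809.0740 — 6 statements merged into one kernel-verified Lean document; each statement's English description precedes it below -/
import Mathlib

section
/- If (X, d) is a compact metric space that is not quasihypermetric, then M(X) = ∞, i.e. the supremum of I(μ) over all finite signed Borel measures μ on X of total mass 1 is infinite. -/
open MeasureTheory Filter Topology

/-- `dmu μ x = ∫ d(x,y) dμ(y)`, defined via the Jordan decomposition of the
finite signed Borel measure `μ`. -/
noncomputable def dmu {X : Type*} [MetricSpace X] [MeasurableSpace X]
    (μ : SignedMeasure X) (x : X) : ℝ :=
  (∫ y, dist x y ∂μ.toJordanDecomposition.posPart) -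
  (∫ y, dist x y ∂μ.toJordanDecomposition.negPart)

/-- `Ibil μ ν = ∫∫ d(x,y) dμ(x)dν(y)`. -/
noncomputable def Ibil {X : Type*} [MetricSpace X] [MeasurableSpace X]
    (μ ν : SignedMeasure X) : ℝ :=
  (∫ x, dmu ν x ∂μ.toJordanDecomposition.posPart) -
  (∫ x, dmu ν x ∂μ.toJordanDecomposition.negPart)

/-- The energy integral `I(μ) = I(μ, μ)`. -/
noncomputable def Ien {X : Type*} [MetricSpace X] [MeasurableSpace X]
    (μ : SignedMeasure X) : ℝ := Ibil μ μ

/-- `(X, d)` is quasihypermetric: for all `n`, reals `α i` summing to `0` and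
points `x i`, `∑ i j, α i * α j * d(x i, x j) ≤ 0`. -/
def Quasihypermetric (X : Type*) [MetricSpace X] : Prop :=
  ∀ (n : ℕ) (α : Fin n → ℝ) (x : Fin n → X),
    (∑ i, α i) = 0 → ∑ i, ∑ j, α i * α j * dist (x i) (x j) ≤ 0

/-- The constant `M(X) = sup { I(μ) : μ a signed Borel measure of total mass 1 }`,
as an extended real number. -/
noncomputable def MXsup (X : Type*) [MetricSpace X] [MeasurableSpace X] : EReal :=
  ⨆ μ : {μ : SignedMeasure X // μ Set.univ = 1}, ((Ien μ.1 : ℝ) : EReal)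

/-!
A configuration violating quasihypermetricity consists of weights `α` with `∑ α i = 0` and
points `x i` with `E = ∑ α i α j d(x i, x j) > 0`. For a point `x₀`, the measures
`δ_{x₀} + t ∑ α i δ_{x i}` have total mass `1` and energy `2tA + t²E`, where
`A = ∑ α i d(x₀, x i)`; this is unbounded as `t → ∞`.
-/

section

variable {X : Type*} [MeasurableSpace X]

noncomputable def jordanIntegral (μ : SignedMeasure X) (f : X → ℝ) : ℝ :=
  (∫ x, f x ∂μ.toJordanDecomposition.posPart) - (∫ x, f x ∂μ.toJordanDecomposition.negPart)

lemma posPart_add_eq_negPart_add (p n : Measure X) [IsFiniteMeasure p] [IsFiniteMeasure n] :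
    (p.toSignedMeasure - n.toSignedMeasure).toJordanDecomposition.posPart + n =
      (p.toSignedMeasure - n.toSignedMeasure).toJordanDecomposition.negPart + p := by
  set j := (p.toSignedMeasure - n.toSignedMeasure).toJordanDecomposition
  have hj : j.posPart.toSignedMeasure - j.negPart.toSignedMeasure =
      p.toSignedMeasure - n.toSignedMeasure :=
    SignedMeasure.toSignedMeasure_toJordanDecomposition _
  rw [← Measure.toSignedMeasure_eq_toSignedMeasure_iff, Measure.toSignedMeasure_add,
    Measure.toSignedMeasure_add]
  exact (sub_eq_sub_iff_add_eq_add.mp hj).trans (add_comm _ _)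

variable [TopologicalSpace X] [OpensMeasurableSpace X] [CompactSpace X]

lemma Continuous.integrable_of_compactSpace {f : X → ℝ} (hf : Continuous f) (μ : Measure X)
    [IsFiniteMeasure μ] : Integrable f μ :=
  hf.integrable_of_hasCompactSupport (.of_compactSpace f)

lemma jordanIntegral_toSignedMeasure_sub (p n : Measure X) [IsFiniteMeasure p]
    [IsFiniteMeasure n] {f : X → ℝ} (hf : Continuous f) :
    jordanIntegral (p.toSignedMeasure - n.toSignedMeasure) f = ∫ x, f x ∂p - ∫ x, f x ∂n := by
  have h := congrArg (fun ν => ∫ x, f x ∂ν) (posPart_add_eq_negPart_add p n)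
  simp only [integral_add_measure (hf.integrable_of_compactSpace _)
    (hf.integrable_of_compactSpace _)] at h
  rw [jordanIntegral]
  linarith

end

section

variable {X : Type*} [MeasurableSpace X] {ι : Type*} [Fintype ι]

noncomputable def positiveDiracSum (w : ι → ℝ) (y : ι → X) : Measure X :=
  ∑ i, (w i).toNNReal • Measure.dirac (y i)

instance (w : ι → ℝ) (y : ι → X) : IsFiniteMeasure (positiveDiracSum w y) := by
  unfold positiveDiracSum; infer_instance

noncomputable def signedDiracSum (w : ι → ℝ) (y : ι → X) : SignedMeasure X :=
  (positiveDiracSum w y).toSignedMeasure - (positiveDiracSum (-w) y).toSignedMeasure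

lemma integral_positiveDiracSum [MeasurableSingletonClass X] (w : ι → ℝ) (y : ι → X)
    (f : X → ℝ) : ∫ x, f x ∂positiveDiracSum w y = ∑ i, max (w i) 0 * f (y i) := by
  rw [positiveDiracSum, integral_finsetSum_measure fun i _ =>
    (integrable_dirac (by simp)).smul_measure ENNReal.coe_ne_top]
  simp [integral_smul_nnreal_measure, NNReal.smul_def, Real.coe_toNNReal']

lemma integral_positiveDiracSum_sub_neg [MeasurableSingletonClass X] (w : ι → ℝ) (y : ι → X)
    (f : X → ℝ) :
    ∫ x, f x ∂positiveDiracSum w y - ∫ x, f x ∂positiveDiracSum (-w) y = ∑ i, w i * f (y i) := by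
  simp only [integral_positiveDiracSum, ← Finset.sum_sub_distrib, ← sub_mul, Pi.neg_apply,
    max_zero_sub_eq_self]

lemma signedDiracSum_univ [MeasurableSingletonClass X] (w : ι → ℝ) (y : ι → X) :
    signedDiracSum w y Set.univ = ∑ i, w i := by
  have h := integral_positiveDiracSum_sub_neg w y fun _ => 1
  simp only [integral_const, smul_eq_mul, mul_one] at h
  rw [signedDiracSum, Measure.toSignedMeasure_sub_apply MeasurableSet.univ, h]

lemma jordanIntegral_signedDiracSum [TopologicalSpace X] [OpensMeasurableSpace X]
    [CompactSpace X] [MeasurableSingletonClass X] (w : ι → ℝ) (y : ι → X) {f : X → ℝ}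
    (hf : Continuous f) : jordanIntegral (signedDiracSum w y) f = ∑ i, w i * f (y i) := by
  rw [signedDiracSum, jordanIntegral_toSignedMeasure_sub _ _ hf,
    integral_positiveDiracSum_sub_neg]

end

section

variable {X : Type*} [MetricSpace X] [CompactSpace X] [MeasurableSpace X] [BorelSpace X]
  {ι : Type*} [Fintype ι]

lemma Ien_signedDiracSum (w : ι → ℝ) (y : ι → X) :
    Ien (signedDiracSum w y) = ∑ i, ∑ j, w i * w j * dist (y i) (y j) := by
  have hdmu : dmu (signedDiracSum w y) = fun x => ∑ j, w j * dist x (y j) :=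
    funext fun x => jordanIntegral_signedDiracSum w y (continuous_const.dist continuous_id)
  change jordanIntegral _ (dmu _) = _
  rw [hdmu, jordanIntegral_signedDiracSum w y (by fun_prop)]
  simp only [Finset.mul_sum, mul_assoc]

end

lemma sum_option_elim_mul_dist {X : Type*} [MetricSpace X] {ι : Type*} [Fintype ι] (x₀ : X)
    (x : ι → X) (t : ℝ) (α : ι → ℝ) :
    ∑ i : Option ι, ∑ j : Option ι, i.elim 1 (t * α ·) * j.elim 1 (t * α ·) *
        dist (i.elim x₀ x) (j.elim x₀ x) =
      2 * t * ∑ i, α i * dist x₀ (x i) + t ^ 2 * ∑ i, ∑ j, α i * α j * dist (x i) (x j) := by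
  simp only [Fintype.sum_option, Option.elim, dist_self, mul_zero, zero_add, Finset.mul_sum,
    dist_comm _ x₀]
  rw [Finset.sum_add_distrib, ← add_assoc, ← Finset.sum_add_distrib]
  congr 1 <;> refine Finset.sum_congr rfl fun i _ => ?_
  · ring
  · exact Finset.sum_congr rfl fun j _ => by ring

lemma exists_lt_two_mul_add_sq_mul {E : ℝ} (hE : 0 < E) (A r : ℝ) :
    ∃ t : ℝ, r < 2 * t * A + t ^ 2 * E := by
  have : Tendsto (fun t : ℝ => t * (t * E + 2 * A)) atTop atTop :=
    tendsto_id.atTop_mul_atTop₀ (tendsto_atTop_add_const_right _ _ (tendsto_id.atTop_mul_const hE))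
  obtain ⟨t, ht⟩ := (this.eventually_gt_atTop r).exists
  exact ⟨t, by linarith⟩

lemma MXsup_eq_top_of_forall_exists_lt {X : Type*} [MetricSpace X] [MeasurableSpace X]
    (h : ∀ r : ℝ, ∃ μ : SignedMeasure X, μ Set.univ = 1 ∧ r < Ien μ) : MXsup X = ⊤ := by
  refine iSup_eq_top.2 fun b hb => ?_
  obtain ⟨r, hbr, -⟩ := EReal.lt_iff_exists_real_btwn.mp hb
  obtain ⟨μ, hμ, hr⟩ := h r
  exact ⟨⟨μ, hμ⟩, hbr.trans (EReal.coe_lt_coe_iff.mpr hr)⟩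

/-- If a compact metric space is not quasihypermetric, then `M(X) = ∞`. -/
theorem stmt_0 {X : Type*} [MetricSpace X] [CompactSpace X]
    [MeasurableSpace X] [BorelSpace X]
    (h : ¬ Quasihypermetric X) : MXsup X = ⊤ := by
  obtain ⟨n, α, x, hsum, hE⟩ : ∃ (n : ℕ) (α : Fin n → ℝ) (x : Fin n → X),
      ∑ i, α i = 0 ∧ 0 < ∑ i, ∑ j, α i * α j * dist (x i) (x j) := by
    simpa [Quasihypermetric] using h
  obtain ⟨i₀⟩ : Nonempty (Fin n) := by
    by_contra hempty
    simp [not_nonempty_iff.mp hempty] at hE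
  refine MXsup_eq_top_of_forall_exists_lt fun r => ?_
  obtain ⟨t, ht⟩ := exists_lt_two_mul_add_sq_mul hE (∑ i, α i * dist (x i₀) (x i)) r
  refine ⟨signedDiracSum (fun i : Option (Fin n) => i.elim 1 (t * α ·))
    (fun i => i.elim (x i₀) x), ?_, ?_⟩
  · simp [signedDiracSum_univ, Fintype.sum_option, ← Finset.mul_sum, hsum]
  · rwa [Ien_signedDiracSum, sum_option_elim_mul_dist]
end

section
/- Let (X, d) be a compact metric space. The image of the linear map T : M(X) → C(X), T(μ) = d_μ, is a finite-dimensional subspace of C(X) if and only if X is a finite set. -/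
open MeasureTheory Filter Topology

lemma cont_integral_dist {X : Type*} [MetricSpace X] [CompactSpace X] [MeasurableSpace X]
    [OpensMeasurableSpace X] (ν : Measure X) [IsFiniteMeasure ν] :
    Continuous fun x : X => ∫ y, dist x y ∂ν := by
  apply MeasureTheory.continuous_of_dominated
    (bound := fun _ => Metric.diam (Set.univ : Set X))
  · intro x
    exact (continuous_const.dist continuous_id).aestronglyMeasurable
  · intro x
    filter_upwards with y
    rw [Real.norm_eq_abs, abs_of_nonneg dist_nonneg]
    exact Metric.dist_le_diam_of_mem isCompact_univ.isBounded (Set.mem_univ x) (Set.mem_univ y)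
  · exact integrable_const _
  · filter_upwards with y
    exact continuous_id.dist continuous_const

/-- The map `T : M(X) → C(X)`, `T(μ) = d_μ`. -/
noncomputable def Tmap {X : Type*} [MetricSpace X] [CompactSpace X] [MeasurableSpace X]
    [OpensMeasurableSpace X] (μ : SignedMeasure X) : C(X, ℝ) :=
  ⟨dmu μ, (cont_integral_dist _).sub (cont_integral_dist _)⟩

/-! In a finite-dimensional space of continuous functions the point evaluations, restricted to the
space, depend norm-continuously on the point, so near a non-isolated point `p` every function of
the space oscillates by much less than its sup norm. The function `d_μ` for `μ = δ_a - δ_b` is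
`dist · a - dist · b`: its sup norm is `d(a, b)` while it differs by `2 d(a, b)` between `a` and
`b`. Hence a finite-dimensional image forces `X` to be discrete, and a compact discrete space is
finite. -/

namespace ContinuousMap

variable {X E : Type*} [TopologicalSpace X]
  [NormedAddCommGroup E] [NormedSpace ℝ E] [FiniteDimensional ℝ E]

lemma continuous_evalCLM_comp (φ : E →ₗ[ℝ] C(X, ℝ)) :
    Continuous fun x : X => (evalCLM ℝ x).comp (LinearMap.toContinuousLinearMap φ) :=
  continuous_clm_apply.2 fun f => (φ f).continuous

lemma eventually_abs_sub_le_mul_norm (φ : E →ₗ[ℝ] C(X, ℝ)) (p : X) {ε : ℝ} (hε : 0 < ε) :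
    ∀ᶠ x in 𝓝 p, ∀ f : E, |φ f x - φ f p| ≤ ε * ‖f‖ := by
  have hnear := Metric.continuousAt_iff'.1 ((continuous_evalCLM_comp φ).continuousAt (x := p)) ε hε
  filter_upwards [hnear] with x hx f
  rw [dist_eq_norm] at hx
  calc |φ f x - φ f p|
      = ‖((evalCLM ℝ x).comp (LinearMap.toContinuousLinearMap φ) -
          (evalCLM ℝ p).comp (LinearMap.toContinuousLinearMap φ)) f‖ := by simp
    _ ≤ _ := ContinuousLinearMap.le_opNorm _ _
    _ ≤ ε * ‖f‖ := by gcongr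

lemma discreteTopology_of_finiteDimensional (φ : E →ₗ[ℝ] C(X, ℝ))
    (hφ : ∀ a b : X, a ≠ b → ∃ f : E, ‖f‖ < |φ f a - φ f b|) : DiscreteTopology X := by
  refine discreteTopology_iff_singleton_mem_nhds.2 fun p => ?_
  filter_upwards [eventually_abs_sub_le_mul_norm φ p one_pos] with x hx
  by_contra hxp
  obtain ⟨f, hf⟩ := hφ x p hxp
  linarith [hx f]

lemma finiteDimensional_of_finite {𝕜 : Type*} [Field 𝕜] [TopologicalSpace 𝕜]
    [IsTopologicalRing 𝕜] [Finite X] : FiniteDimensional 𝕜 C(X, 𝕜) :=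
  .of_injective (coeFnLinearMap 𝕜 : C(X, 𝕜) →ₗ[𝕜] X → 𝕜) DFunLike.coe_injective

end ContinuousMap

section Tmap

variable {X : Type*} [MetricSpace X] [CompactSpace X] [MeasurableSpace X] [BorelSpace X]

lemma Tmap_dirac_sub_dirac_apply {a b : X} (hab : a ≠ b) (z : X) :
    Tmap ((Measure.dirac a).toSignedMeasure - (Measure.dirac b).toSignedMeasure) z
      = dist z a - dist z b := by
  have hJ : ((Measure.dirac a).toSignedMeasure - (Measure.dirac b).toSignedMeasure
      : SignedMeasure X).toJordanDecomposition
      = ⟨Measure.dirac a, Measure.dirac b,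
          ⟨{b}, measurableSet_singleton b, by simp [hab], by simp⟩⟩ :=
    SignedMeasure.toJordanDecomposition_eq rfl
  change dmu _ z = _
  rw [dmu, hJ, integral_dirac, integral_dirac]

lemma norm_lt_abs_Tmap_dirac_sub_dirac {a b : X} (hab : a ≠ b) :
    let f := Tmap ((Measure.dirac a).toSignedMeasure - (Measure.dirac b).toSignedMeasure)
    ‖f‖ < |f a - f b| := by
  intro f
  have hf : ∀ z, f z = dist z a - dist z b := Tmap_dirac_sub_dirac_apply hab
  have hnorm : ‖f‖ ≤ dist a b := (ContinuousMap.norm_le _ dist_nonneg).2 fun z => by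
    rw [hf, Real.norm_eq_abs, dist_comm z a, dist_comm z b]
    exact abs_dist_sub_le a b z
  have hab' : 0 < dist a b := dist_pos.2 hab
  rw [hf, hf, dist_self, dist_self, dist_comm b a, abs_of_neg (by linarith)]
  linarith

end Tmap

/-- The image of `T : M(X) → C(X)` is a finite-dimensional subspace of `C(X)`
iff `X` is finite. -/
theorem stmt_5 {X : Type*} [MetricSpace X] [CompactSpace X]
    [MeasurableSpace X] [BorelSpace X] :
    FiniteDimensional ℝ (Submodule.span ℝ (Set.range (Tmap (X := X)))) ↔ Finite X := by
  set F := Submodule.span ℝ (Set.range (Tmap (X := X)))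
  refine ⟨fun _ => ?_, fun _ => ?_⟩
  · have : DiscreteTopology X :=
      ContinuousMap.discreteTopology_of_finiteDimensional (E := F) F.subtype fun a b hab =>
        ⟨⟨_, Submodule.subset_span ⟨_, rfl⟩⟩, norm_lt_abs_Tmap_dirac_sub_dirac hab⟩
    exact finite_of_compact_of_discrete
  · have := ContinuousMap.finiteDimensional_of_finite (X := X) (𝕜 := ℝ)
    infer_instance
end

section
/- Let (X, d) be a compact quasihypermetric space with diameter D(X). Then for every μ ∈ M_0(X), one has −I(μ) ≤ (D(X)/2) · ‖μ‖_M², i.e. the E_0(X)-seminorm ‖μ‖ = (−I(μ))^{1/2} satisfies ‖μ‖ ≤ (D(X)/2)^{1/2} ‖μ‖_M. -/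
open MeasureTheory Filter Topology

/-- The total variation norm `‖μ‖_M` of a finite signed Borel measure. -/
noncomputable def normM {X : Type*} [MeasurableSpace X] (μ : SignedMeasure X) : ℝ :=
  (μ.totalVariation Set.univ).toReal

/-!
Write `μ = μ⁺ - μ⁻` (Jordan decomposition), with masses `a = μ⁺(X)` and `b = μ⁻(X)`. Expanding,
`-I(μ) = 2 I(μ⁺, μ⁻) - I(μ⁺) - I(μ⁻)`. The two energies of positive measures are nonnegative and
the cross term is at most `a b D(X)` since `d ≤ D(X)`, so `-I(μ) ≤ 2 a b D(X) ≤ (D(X)/2) (a + b)²`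
by AM–GM, and `a + b = ‖μ‖_M`.
-/

theorem normM_eq_posPart_add_negPart {X : Type*} [MeasurableSpace X] (μ : SignedMeasure X) :
    normM μ = μ.toJordanDecomposition.posPart.real Set.univ +
      μ.toJordanDecomposition.negPart.real Set.univ :=
  measureReal_add_apply

noncomputable def distPotential {X : Type*} [MetricSpace X] [MeasurableSpace X] (ν : Measure X)
    (x : X) : ℝ :=
  ∫ y, dist x y ∂ν

theorem dmu_eq_sub_distPotential {X : Type*} [MetricSpace X] [MeasurableSpace X]
    (μ : SignedMeasure X) :
    dmu μ = distPotential μ.toJordanDecomposition.posPart -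
      distPotential μ.toJordanDecomposition.negPart :=
  rfl

theorem distPotential_nonneg {X : Type*} [MetricSpace X] [MeasurableSpace X] (ν : Measure X)
    (x : X) : 0 ≤ distPotential ν x :=
  integral_nonneg fun _ => dist_nonneg

theorem integral_distPotential_nonneg {X : Type*} [MetricSpace X] [MeasurableSpace X]
    (ν ρ : Measure X) : 0 ≤ ∫ x, distPotential ν x ∂ρ :=
  integral_nonneg (distPotential_nonneg ν)

theorem dist_le_diam_univ {X : Type*} [PseudoMetricSpace X] [CompactSpace X] (x y : X) :
    dist x y ≤ Metric.diam (Set.univ : Set X) :=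
  Metric.dist_le_diam_of_mem isCompact_univ.isBounded trivial trivial

theorem distPotential_le {X : Type*} [MetricSpace X] [CompactSpace X] [MeasurableSpace X]
    (ν : Measure X) [IsFiniteMeasure ν] (x : X) :
    distPotential ν x ≤ ν.real Set.univ * Metric.diam (Set.univ : Set X) := by
  calc distPotential ν x ≤ ∫ _, Metric.diam (Set.univ : Set X) ∂ν :=
        integral_mono_of_nonneg (.of_forall fun _ => dist_nonneg) (integrable_const _)
          (.of_forall (dist_le_diam_univ x))
    _ = ν.real Set.univ * Metric.diam (Set.univ : Set X) := by rw [integral_const, smul_eq_mul]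

section distPotential

variable {X : Type*} [MetricSpace X] [CompactSpace X] [MeasurableSpace X] [BorelSpace X]

theorem continuous_distPotential (ν : Measure X) [IsFiniteMeasure ν] :
    Continuous (distPotential ν) := by
  show Continuous fun x => ∫ y, dist x y ∂ν
  simpa using continuous_parametric_integral_of_continuous (μ := ν)
    (f := dist) continuous_dist isCompact_univ

theorem integrable_distPotential (ν ρ : Measure X) [IsFiniteMeasure ν] [IsFiniteMeasure ρ] :
    Integrable (distPotential ν) ρ :=
  (continuous_distPotential ν).integrable_of_hasCompactSupport
    (HasCompactSupport.of_compactSpace _)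

theorem integral_distPotential_le (ν ρ : Measure X) [IsFiniteMeasure ν] [IsFiniteMeasure ρ] :
    ∫ x, distPotential ν x ∂ρ ≤
      ρ.real Set.univ * (ν.real Set.univ * Metric.diam (Set.univ : Set X)) := by
  calc ∫ x, distPotential ν x ∂ρ
      ≤ ∫ _, ν.real Set.univ * Metric.diam (Set.univ : Set X) ∂ρ :=
        integral_mono (integrable_distPotential ν ρ) (integrable_const _) (distPotential_le ν)
    _ = _ := by rw [integral_const, smul_eq_mul]

theorem neg_Ien_le (μ : SignedMeasure X) :
    -Ien μ ≤ 2 * μ.toJordanDecomposition.posPart.real Set.univ *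
      μ.toJordanDecomposition.negPart.real Set.univ * Metric.diam (Set.univ : Set X) := by
  set μp := μ.toJordanDecomposition.posPart
  set μn := μ.toJordanDecomposition.negPart
  have hI : Ien μ = (∫ x, distPotential μp x ∂μp) - (∫ x, distPotential μn x ∂μp) -
      ((∫ x, distPotential μp x ∂μn) - (∫ x, distPotential μn x ∂μn)) := by
    rw [Ien, Ibil, dmu_eq_sub_distPotential, Pi.sub_def,
      integral_sub (integrable_distPotential μp μp) (integrable_distPotential μn μp),
      integral_sub (integrable_distPotential μp μn) (integrable_distPotential μn μn)]
  linarith [integral_distPotential_nonneg μp μp, integral_distPotential_nonneg μn μn,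
    integral_distPotential_le μn μp, integral_distPotential_le μp μn]

end distPotential

theorem stmt_13_general {X : Type*} [MetricSpace X] [CompactSpace X]
    [MeasurableSpace X] [BorelSpace X]
    (μ : SignedMeasure X) :
    -Ien μ ≤ (Metric.diam (Set.univ : Set X) / 2) * normM μ ^ 2 ∧
    Real.sqrt (-Ien μ) ≤ Real.sqrt (Metric.diam (Set.univ : Set X) / 2) * normM μ := by
  set D := Metric.diam (Set.univ : Set X)
  have key : -Ien μ ≤ (D / 2) * normM μ ^ 2 := by
    rw [normM_eq_posPart_add_negPart]
    nlinarith [neg_Ien_le μ, Metric.diam_nonneg (s := (Set.univ : Set X)),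
      sq_nonneg (μ.toJordanDecomposition.posPart.real Set.univ -
        μ.toJordanDecomposition.negPart.real Set.univ)]
  refine ⟨key, ?_⟩
  calc Real.sqrt (-Ien μ) ≤ Real.sqrt ((D / 2) * normM μ ^ 2) := Real.sqrt_le_sqrt key
    _ = Real.sqrt (D / 2) * normM μ := by
        rw [Real.sqrt_mul' _ (sq_nonneg _),
          Real.sqrt_sq (show 0 ≤ normM μ from ENNReal.toReal_nonneg)]

/-- In a compact quasihypermetric space, `−I(μ) ≤ (D(X)/2)·‖μ‖_M²` for all
`μ ∈ M₀(X)`; equivalently `‖μ‖ = (−I(μ))^{1/2} ≤ (D(X)/2)^{1/2} ‖μ‖_M`. -/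
theorem stmt_13 {X : Type*} [MetricSpace X] [CompactSpace X]
    [MeasurableSpace X] [BorelSpace X]
    (hq : ∀ μ : SignedMeasure X, μ Set.univ = 0 → Ien μ ≤ 0)
    (μ : SignedMeasure X) (hμ : μ Set.univ = 0) :
    -Ien μ ≤ (Metric.diam (Set.univ : Set X) / 2) * normM μ ^ 2 ∧
    Real.sqrt (-Ien μ) ≤ Real.sqrt (Metric.diam (Set.univ : Set X) / 2) * normM μ :=
  stmt_13_general μ
end

section
/- Let (X, d) be an infinite compact quasihypermetric space. Then there exists a sequence (μ_n) in M_0(X) such that −I(μ_n) → 0 (i.e. μ_n → 0 in the seminorm of E_0(X)), but (μ_n) converges neither in the weak-* topology on M(X) nor in the total variation norm; in particular ‖μ_n‖_M → ∞. -/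
/-!
Dipoles `c • (δ_z - δ_p)` lie in `M₀(X)`, have energy `I = -2 c² d(z, p)` and total variation
`2 c`. An infinite compact space has a non-isolated point `p`, so we may let `z n → p` so fast
that `-I(μ n) → 0` even with `c n = n + 1`. But a weak-* or norm convergent sequence of dipoles
has bounded coefficients `c n`: in the weak-* case by Banach–Steinhaus, since `c n` is the norm of
`μ n` as a functional on `C(X, ℝ)`; in the norm case because `μ n {p} = -c n`.
-/

open MeasureTheory Filter Topology

/-- Integration of a function against a signed measure, via Jordan decomposition. -/
noncomputable def integSM {X : Type*} [MeasurableSpace X] (μ : SignedMeasure X)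
    (f : X → ℝ) : ℝ :=
  (∫ x, f x ∂μ.toJordanDecomposition.posPart) -
  (∫ x, f x ∂μ.toJordanDecomposition.negPart)

/-- The weak-* topology on the space of finite signed Borel measures on `X`,
i.e. the topology induced by the maps `μ ↦ ∫ f dμ` for `f ∈ C(X, ℝ)`. -/
noncomputable def weakStar (X : Type*) [TopologicalSpace X] [MeasurableSpace X] :
    TopologicalSpace (SignedMeasure X) :=
  TopologicalSpace.induced
    (fun μ : SignedMeasure X => fun f : C(X, ℝ) => integSM μ f) inferInstance

open scoped NNReal

/-- The signed measure `c • (δ_z - δ_p)`, given through its Jordan decomposition. -/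
noncomputable def dipoleJordan {X : Type*} [MeasurableSpace X] [MeasurableSingletonClass X]
    (z p : X) (hzp : z ≠ p) (c : ℝ≥0) : JordanDecomposition X where
  posPart := c • Measure.dirac z
  negPart := c • Measure.dirac p
  mutuallySingular := by
    refine ⟨{p}, measurableSet_singleton p, ?_, ?_⟩
    · simp [Measure.dirac_apply' _ (measurableSet_singleton p), hzp]
    · simp [Measure.dirac_apply' _ (measurableSet_singleton p).compl]

noncomputable def dipole {X : Type*} [MeasurableSpace X] [MeasurableSingletonClass X]
    (z p : X) (hzp : z ≠ p) (c : ℝ≥0) : SignedMeasure X :=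
  (dipoleJordan z p hzp c).toSignedMeasure

lemma integSM_toSignedMeasure {X : Type*} [MeasurableSpace X] (j : JordanDecomposition X)
    (f : X → ℝ) : integSM j.toSignedMeasure f = (∫ x, f x ∂j.posPart) - ∫ x, f x ∂j.negPart := by
  simp [integSM]

lemma abs_apply_le_normM {X : Type*} [MeasurableSpace X] (ν : SignedMeasure X) {s : Set X}
    (hs : MeasurableSet s) : |ν s| ≤ normM ν := by
  set j := ν.toJordanDecomposition
  have hν : ν s = (j.posPart s).toReal - (j.negPart s).toReal := by
    conv_lhs => rw [← ν.toSignedMeasure_toJordanDecomposition]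
    exact Measure.toSignedMeasure_sub_apply hs
  have hnorm : normM ν = (j.posPart Set.univ).toReal + (j.negPart Set.univ).toReal := by
    rw [normM, SignedMeasure.totalVariation, Measure.add_apply,
      ENNReal.toReal_add (measure_ne_top _ _) (measure_ne_top _ _)]
  rw [hν, hnorm]
  refine (abs_sub _ _).trans (add_le_add ?_ ?_) <;>
    rw [abs_of_nonneg ENNReal.toReal_nonneg] <;>
    exact ENNReal.toReal_mono (measure_ne_top _ _) (measure_mono (Set.subset_univ s))

section Dipole

variable {X : Type*} [MeasurableSpace X] [MeasurableSingletonClass X]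

@[simp]
lemma toJordanDecomposition_dipole (z p : X) (hzp : z ≠ p) (c : ℝ≥0) :
    (dipole z p hzp c).toJordanDecomposition = dipoleJordan z p hzp c :=
  JordanDecomposition.toJordanDecomposition_toSignedMeasure _

lemma integSM_dipole (z p : X) (hzp : z ≠ p) (c : ℝ≥0) (f : X → ℝ) :
    integSM (dipole z p hzp c) f = c * (f z - f p) := by
  simp [dipole, integSM_toSignedMeasure, dipoleJordan, integral_smul_nnreal_measure,
    NNReal.smul_def, mul_sub]

lemma dipole_apply {s : Set X} (hs : MeasurableSet s) (z p : X) (hzp : z ≠ p) (c : ℝ≥0) :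
    dipole z p hzp c s = c * ((Measure.dirac z).real s - (Measure.dirac p).real s) := by
  simp [dipole, JordanDecomposition.toSignedMeasure, Measure.toSignedMeasure_apply, hs,
    dipoleJordan, mul_sub, NNReal.smul_def]

lemma dipole_apply_univ (z p : X) (hzp : z ≠ p) (c : ℝ≥0) : dipole z p hzp c Set.univ = 0 := by
  simp [dipole_apply MeasurableSet.univ]

lemma dipole_apply_singleton_right (z p : X) (hzp : z ≠ p) (c : ℝ≥0) :
    dipole z p hzp c {p} = -c := by
  simp [dipole_apply (measurableSet_singleton p), measureReal_def,
    Measure.dirac_apply' _ (measurableSet_singleton p), hzp]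

lemma normM_dipole (z p : X) (hzp : z ≠ p) (c : ℝ≥0) : normM (dipole z p hzp c) = 2 * c := by
  simp only [normM, SignedMeasure.totalVariation, toJordanDecomposition_dipole, dipoleJordan]
  simp only [Measure.coe_add, Measure.coe_smul, Pi.add_apply, Pi.smul_apply, measure_univ,
    ENNReal.smul_one, two_mul]
  norm_cast

lemma Ien_dipole [MetricSpace X] (z p : X) (hzp : z ≠ p) (c : ℝ≥0) :
    Ien (dipole z p hzp c) = -2 * c ^ 2 * dist z p := by
  have hdmu : ∀ x, dmu (dipole z p hzp c) x = c * (dist x z - dist x p) :=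
    fun x => integSM_dipole z p hzp c _
  rw [Ien, Ibil, ← integSM, integSM_dipole, hdmu, hdmu, dist_self, dist_self, dist_comm p z]
  ring

end Dipole

lemma exists_forall_exists_ne_dist_lt {X : Type*} [MetricSpace X] [CompactSpace X] [Infinite X] :
    ∃ p : X, ∀ ε > 0, ∃ z, z ≠ p ∧ dist z p < ε := by
  obtain ⟨p, -, hp⟩ :=
    (Set.infinite_univ (α := X)).exists_accPt_of_subset_isCompact isCompact_univ (Set.Subset.refl _)
  refine ⟨p, fun ε hε => ?_⟩
  obtain ⟨z, ⟨hz, -⟩, hzp⟩ := accPt_iff_nhds.1 hp _ (Metric.ball_mem_nhds p hε)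
  exact ⟨z, hzp, hz⟩

section Unbounded

variable {X : Type*} [MeasurableSpace X] [MeasurableSingletonClass X]
  {z : ℕ → X} {p : X} {c : ℕ → ℝ≥0}

/-- `c n` is the norm of the `n`-th dipole as a functional on `C(X, ℝ)`, attained at an Urysohn
function. -/
lemma bddAbove_of_forall_tendsto_integSM_dipole [TopologicalSpace X] [T2Space X] [CompactSpace X]
    (hzp : ∀ n, z n ≠ p) (h : ∀ f : C(X, ℝ), ∃ l,
      Tendsto (fun n => integSM (dipole (z n) p (hzp n) (c n)) f) atTop (𝓝 l)) :
    BddAbove (Set.range fun n => (c n : ℝ)) := by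
  set T : ℕ → C(X, ℝ) →L[ℝ] ℝ :=
    fun n => (c n : ℝ) • (ContinuousMap.evalCLM ℝ (z n) - ContinuousMap.evalCLM ℝ p)
  have hT : ∀ n f, T n f = integSM (dipole (z n) p (hzp n) (c n)) f := by
    simp [T, integSM_dipole]
  obtain ⟨C, hC⟩ := banach_steinhaus fun f => by
    obtain ⟨l, hl⟩ := h f
    obtain ⟨C, hC⟩ := hl.norm.bddAbove_range
    exact ⟨C, fun n => hT n f ▸ hC (Set.mem_range_self n)⟩
  refine ⟨C, Set.forall_mem_range.2 fun n => ?_⟩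
  obtain ⟨g, hgp, hgz, hg01⟩ := exists_continuous_zero_one_of_isClosed (isClosed_singleton (x := p))
    (isClosed_singleton (x := z n)) (Set.disjoint_singleton.2 (hzp n).symm)
  have hg : ‖g‖ ≤ 1 := (ContinuousMap.norm_le _ zero_le_one).2 fun x =>
    abs_le.2 ⟨by linarith [(hg01 x).1], (hg01 x).2⟩
  calc (c n : ℝ) = T n g := by simp [T, hgp rfl, hgz rfl]
    _ ≤ ‖T n‖ * ‖g‖ := (le_abs_self _).trans ((T n).le_opNorm g)
    _ ≤ C := by nlinarith [hC n, norm_nonneg (T n), norm_nonneg g]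

lemma bddAbove_of_tendsto_normM_dipole_sub (hzp : ∀ n, z n ≠ p) {μ : SignedMeasure X}
    (h : Tendsto (fun n => normM (dipole (z n) p (hzp n) (c n) - μ)) atTop (𝓝 0)) :
    BddAbove (Set.range fun n => (c n : ℝ)) := by
  have hp : Tendsto (fun n => (dipole (z n) p (hzp n) (c n) - μ) {p}) atTop (𝓝 0) :=
    squeeze_zero_norm (fun n => abs_apply_le_normM _ (measurableSet_singleton p)) h
  have hc : Tendsto (fun n => (c n : ℝ)) atTop (𝓝 (-μ {p})) := by
    simpa [dipole_apply_singleton_right] using (hp.add_const (μ {p})).neg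
  exact hc.bddAbove_range

end Unbounded

theorem stmt_14_general {X : Type*} [MetricSpace X] [CompactSpace X]
    [MeasurableSpace X] [BorelSpace X] [Infinite X] :
    ∃ μs : ℕ → SignedMeasure X,
      (∀ n, μs n Set.univ = 0) ∧
      Tendsto (fun n => -Ien (μs n)) atTop (nhds 0) ∧
      (¬ ∃ μ : SignedMeasure X, ∀ f : C(X, ℝ),
          Tendsto (fun n => integSM (μs n) f) atTop (nhds (integSM μ f))) ∧
      (¬ ∃ μ : SignedMeasure X,
          Tendsto (fun n => normM (μs n - μ)) atTop (nhds 0)) ∧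
      Tendsto (fun n => normM (μs n)) atTop atTop := by
  obtain ⟨p, hp⟩ := exists_forall_exists_ne_dist_lt (X := X)
  choose z hzp hz using fun n : ℕ => hp (1 / ((n : ℝ) + 1) ^ 3) (by positivity)
  set c : ℕ → ℝ≥0 := fun n => n + 1
  have hc : Tendsto (fun n => (c n : ℝ)) atTop atTop := by
    simpa [c] using tendsto_atTop_add_const_right atTop 1 tendsto_natCast_atTop_atTop
  have hc_unbdd := not_bddAbove_of_tendsto_atTop hc
  have henergy : ∀ n, -Ien (dipole (z n) p (hzp n) (c n)) ≤ 2 * (1 / ((n : ℝ) + 1)) := by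
    intro n
    have hn : (0 : ℝ) < n + 1 := by positivity
    have hd := (lt_div_iff₀ (by positivity)).1 (hz n)
    rw [Ien_dipole, mul_one_div, le_div_iff₀ hn]
    simp only [c, NNReal.coe_add, NNReal.coe_natCast, NNReal.coe_one]
    nlinarith
  refine ⟨fun n => dipole (z n) p (hzp n) (c n), fun n => dipole_apply_univ _ _ _ _,
    ?_, fun ⟨μ, hμ⟩ => hc_unbdd (bddAbove_of_forall_tendsto_integSM_dipole hzp fun f => ⟨_, hμ f⟩),
    fun ⟨μ, hμ⟩ => hc_unbdd (bddAbove_of_tendsto_normM_dipole_sub hzp hμ), ?_⟩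
  · refine squeeze_zero (fun n => ?_) henergy
      (by simpa using tendsto_one_div_add_atTop_nhds_zero_nat.const_mul (2 : ℝ))
    rw [Ien_dipole]
    nlinarith [dist_nonneg (x := z n) (y := p), sq_nonneg (c n : ℝ)]
  · simpa [normM_dipole] using hc.const_mul_atTop two_pos

/-- In an infinite compact quasihypermetric space there is a sequence in `M₀(X)`
converging to `0` in the seminorm of `E₀(X)` which converges neither weak-* nor
in total variation norm; in particular `‖μ_n‖_M → ∞`. -/
theorem stmt_14 {X : Type*} [MetricSpace X] [CompactSpace X]
    [MeasurableSpace X] [BorelSpace X] [Infinite X]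
    (hq : ∀ μ : SignedMeasure X, μ Set.univ = 0 → Ien μ ≤ 0) :
    ∃ μs : ℕ → SignedMeasure X,
      (∀ n, μs n Set.univ = 0) ∧
      Tendsto (fun n => -Ien (μs n)) atTop (nhds 0) ∧
      (¬ ∃ μ : SignedMeasure X, ∀ f : C(X, ℝ),
          Tendsto (fun n => integSM (μs n) f) atTop (nhds (integSM μ f))) ∧
      (¬ ∃ μ : SignedMeasure X,
          Tendsto (fun n => normM (μs n - μ)) atTop (nhds 0)) ∧
      Tendsto (fun n => normM (μs n)) atTop atTop :=
  stmt_14_general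
end

section
/- Let (X, d) be a compact quasihypermetric space. Then for μ ∈ M_0(X), one has I(μ) = 0 if and only if the function d_μ is constant on X. Equivalently, the null space F = { μ ∈ M_0(X) : −I(μ) = 0 } of the seminorm on E_0(X) equals { μ ∈ M_0(X) : d_μ is a constant function }. -/
/-! The energy `I` is the quadratic form of the symmetric (by Fubini) bilinear form `I(μ, ν)`, and
it is nonpositive on `M₀(X)`. If `I(μ) = 0`, then for every `ν ∈ M₀(X)` the function
`t ↦ I(μ + tν) = 2t I(μ, ν) + t² I(ν)` is nonpositive, which forces `I(μ, ν) = 0`; testing against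
`ν = δₓ - δₓ₀` gives `d_μ(x) = d_μ(x₀)`. Conversely, if `d_μ ≡ c` then `I(μ) = c μ(X) = 0`. -/

open MeasureTheory Filter Topology

open VectorMeasure

instance MeasureTheory.SignedMeasure.isFiniteMeasure_variation {Y : Type*} [MeasurableSpace Y]
    (μ : SignedMeasure Y) : IsFiniteMeasure μ.variation :=
  μ.totalVariation_eq_variation ▸ inferInstance

theorem MeasureTheory.SignedMeasure.integral_eq_integral_posPart_sub_integral_negPart
    {Y : Type*} [MeasurableSpace Y] (μ : SignedMeasure Y) {f : Y → ℝ}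
    (hpos : Integrable f μ.toJordanDecomposition.posPart)
    (hneg : Integrable f μ.toJordanDecomposition.negPart) :
    ∫ᵛ y, f y ∂<•μ = (∫ y, f y ∂μ.toJordanDecomposition.posPart) -
      ∫ y, f y ∂μ.toJordanDecomposition.negPart := by
  conv_lhs => rw [← μ.toSignedMeasure_toJordanDecomposition]
  rw [JordanDecomposition.toSignedMeasure, integral_sub_vectorMeasure, integral_toSignedMeasure,
    integral_toSignedMeasure]
  · simpa [VectorMeasure.Integrable] using hpos
  · simpa [VectorMeasure.Integrable] using hneg

theorem Continuous.integrable_of_compactSpace_s15 {Y E : Type*} [TopologicalSpace Y] [CompactSpace Y]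
    [MeasurableSpace Y] [OpensMeasurableSpace Y] [NormedAddCommGroup E] {f : Y → E}
    (hf : Continuous f) (ρ : Measure Y) [IsFiniteMeasure ρ] : Integrable f ρ :=
  hf.integrable_of_hasCompactSupport (.of_compactSpace f)

section Energy

variable {X : Type*} [MetricSpace X] [CompactSpace X] [MeasurableSpace X] [OpensMeasurableSpace X]

theorem continuous_integral_dist (ρ : Measure X) [IsFiniteMeasure ρ] :
    Continuous fun x => ∫ y, dist x y ∂ρ := by
  simpa using continuous_parametric_integral_of_continuous (μ := ρ) continuous_dist isCompact_univ

theorem continuous_dmu (μ : SignedMeasure X) : Continuous (dmu μ) :=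
  (continuous_integral_dist _).sub (continuous_integral_dist _)

-- `Ibil` integrates against the Jordan parts of `μ`; recast as an integral against the vector
-- measure `μ` itself, it becomes linear in `μ`.
theorem Ibil_eq_integral (μ ν : SignedMeasure X) : Ibil μ ν = ∫ᵛ x, dmu ν x ∂<•μ :=
  (μ.integral_eq_integral_posPart_sub_integral_negPart
    ((continuous_dmu ν).integrable_of_compactSpace_s15 _)
    ((continuous_dmu ν).integrable_of_compactSpace_s15 _)).symm

theorem Ibil_add_left (μ μ' ν : SignedMeasure X) : Ibil (μ + μ') ν = Ibil μ ν + Ibil μ' ν := by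
  simp only [Ibil_eq_integral]
  exact integral_add_vectorMeasure ((continuous_dmu ν).integrable_of_compactSpace_s15 _)
    ((continuous_dmu ν).integrable_of_compactSpace_s15 _)

theorem Ibil_smul_left (t : ℝ) (μ ν : SignedMeasure X) : Ibil (t • μ) ν = t * Ibil μ ν := by
  simp only [Ibil_eq_integral]
  exact integral_smul_vectorMeasure _ t

theorem integral_integral_dist_comm (ρ σ : Measure X) [IsFiniteMeasure ρ] [IsFiniteMeasure σ] :
    ∫ x, ∫ y, dist x y ∂σ ∂ρ = ∫ y, ∫ x, dist y x ∂ρ ∂σ := by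
  rw [integral_integral_swap (continuous_dist.integrable_of_compactSpace_s15 _)]
  simp_rw [dist_comm]

theorem integral_dmu (ρ : Measure X) [IsFiniteMeasure ρ] (ν : SignedMeasure X) :
    ∫ x, dmu ν x ∂ρ = (∫ x, ∫ y, dist x y ∂ν.toJordanDecomposition.posPart ∂ρ) -
      ∫ x, ∫ y, dist x y ∂ν.toJordanDecomposition.negPart ∂ρ :=
  integral_sub ((continuous_integral_dist _).integrable_of_compactSpace_s15 _)
    ((continuous_integral_dist _).integrable_of_compactSpace_s15 _)

theorem Ibil_comm (μ ν : SignedMeasure X) : Ibil μ ν = Ibil ν μ := by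
  simp only [Ibil, integral_dmu, integral_integral_dist_comm μ.toJordanDecomposition.posPart,
    integral_integral_dist_comm μ.toJordanDecomposition.negPart]
  ring

theorem Ibil_add_right (μ ν ν' : SignedMeasure X) : Ibil μ (ν + ν') = Ibil μ ν + Ibil μ ν' := by
  rw [Ibil_comm, Ibil_add_left, Ibil_comm ν, Ibil_comm ν']

theorem Ibil_smul_right (t : ℝ) (μ ν : SignedMeasure X) : Ibil μ (t • ν) = t * Ibil μ ν := by
  rw [Ibil_comm, Ibil_smul_left, Ibil_comm]

theorem Ien_add_smul (μ ν : SignedMeasure X) (t : ℝ) :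
    Ien (μ + t • ν) = Ien μ + 2 * t * Ibil μ ν + t ^ 2 * Ien ν := by
  simp only [Ien, Ibil_add_left, Ibil_add_right, Ibil_smul_left, Ibil_smul_right, Ibil_comm ν μ]
  ring

theorem Ibil_eq_mul_of_dmu_eq_const {μ ν : SignedMeasure X} {c : ℝ} (h : ∀ x, dmu ν x = c) :
    Ibil μ ν = μ Set.univ * c := by
  simp [Ibil_eq_integral, h]

theorem Ibil_dirac_sub_dirac (x x₀ : X) (ν : SignedMeasure X) :
    Ibil (dirac x 1 - dirac x₀ 1) ν = dmu ν x - dmu ν x₀ := by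
  rw [Ibil_eq_integral, integral_sub_vectorMeasure ((continuous_dmu ν).integrable_of_compactSpace_s15 _)
    ((continuous_dmu ν).integrable_of_compactSpace_s15 _),
    VectorMeasure.integral_dirac' (continuous_dmu ν).stronglyMeasurable,
    VectorMeasure.integral_dirac' (continuous_dmu ν).stronglyMeasurable]
  simp

end Energy

def IsQuasihypermetric (X : Type*) [MetricSpace X] [MeasurableSpace X] : Prop :=
  ∀ μ : SignedMeasure X, μ Set.univ = 0 → Ien μ ≤ 0

theorem IsQuasihypermetric.Ibil_eq_zero_of_Ien_eq_zero {X : Type*} [MetricSpace X]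
    [CompactSpace X] [MeasurableSpace X] [OpensMeasurableSpace X] (hX : IsQuasihypermetric X)
    {μ ν : SignedMeasure X} (hμ : μ Set.univ = 0) (hμ₀ : Ien μ = 0) (hν : ν Set.univ = 0) :
    Ibil μ ν = 0 := by
  have hquad : ∀ t : ℝ, 0 ≤ -Ien ν * (t * t) + -(2 * Ibil μ ν) * t + 0 := fun t => by
    have := hX (μ + t • ν) (by simp [hμ, hν])
    rw [Ien_add_smul, hμ₀] at this
    linarith
  have hdisc := discrim_le_zero hquad
  rw [discrim] at hdisc
  nlinarith [sq_nonneg (Ibil μ ν)]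

/-- In a compact quasihypermetric space, for `μ ∈ M₀(X)` one has `I(μ) = 0` iff
`d_μ` is a constant function on `X`. -/
theorem stmt_15 {X : Type*} [MetricSpace X] [CompactSpace X]
    [MeasurableSpace X] [BorelSpace X]
    (hq : ∀ μ : SignedMeasure X, μ Set.univ = 0 → Ien μ ≤ 0) :
    ∀ μ : SignedMeasure X, μ Set.univ = 0 →
      (Ien μ = 0 ↔ ∃ c : ℝ, ∀ x : X, dmu μ x = c) := by
  intro μ hμ
  constructor
  · intro hμ₀
    rcases isEmpty_or_nonempty X with _ | ⟨⟨x₀⟩⟩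
    · exact ⟨0, isEmptyElim⟩
    refine ⟨dmu μ x₀, fun x => ?_⟩
    have := IsQuasihypermetric.Ibil_eq_zero_of_Ien_eq_zero hq hμ hμ₀
      (ν := dirac x 1 - dirac x₀ 1) (by simp)
    rw [Ibil_comm, Ibil_dirac_sub_dirac] at this
    linarith
  · rintro ⟨c, hc⟩
    rw [Ien, Ibil_eq_mul_of_dmu_eq_const hc, hμ, zero_mul]
end

section
/- Let (X, d) be a compact quasihypermetric space with M(X) < ∞, and for μ ∈ M(X) write ‖μ‖_E = ((M(X)+1)·μ(X)² − I(μ))^{1/2} for the seminorm of the space E(X). Then (1) |μ(X)| ≤ ‖μ‖_E for all μ ∈ M(X), and (2) ‖d_μ‖_∞ ≤ (M(X) + 1 + (M(X)+1)^{1/2}) · ‖μ‖_E for all μ ∈ M(X). -/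
open MeasureTheory Filter Topology

/-!
Normalising to unit mass gives `I(μ) ≤ M μ(X)²` when `μ(X) ≠ 0`, and quasihypermetricity gives it
when `μ(X) = 0`. Thus `(μ | μ) ≥ μ(X)²`: this is (1), and it makes `( | )` positive semidefinite.
Since `(μ | δₓ) = (M + 1) μ(X) - d_μ(x)` and `(δₓ | δₓ) = M + 1`, Cauchy–Schwarz gives
`|(M + 1) μ(X) - d_μ(x)| ≤ ‖μ‖_E (M + 1)^{1/2}`, and (2) follows from (1) by the triangle
inequality. For continuous integrands the Jordan-decomposition integrals defining `dmu` and `Ibil`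
agree with Mathlib's `∫ᵛ x, f x ∂<•μ`, which is linear in `μ`.
-/

namespace QuasihypermetricEnergy

variable {X : Type*} [MeasurableSpace X]

theorem dirac_toSignedMeasure_univ (x : X) : (Measure.dirac x).toSignedMeasure Set.univ = 1 := by
  simp [Measure.toSignedMeasure_apply_measurable MeasurableSet.univ]

instance (μ : SignedMeasure X) : IsFiniteMeasure μ.variation := by
  rw [← SignedMeasure.totalVariation_eq_variation]; infer_instance

variable [MetricSpace X]

theorem Ien_le_MXsup_toReal (hM : MXsup X < ⊤) {ν : SignedMeasure X} (hν : ν Set.univ = 1) :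
    Ien ν ≤ (MXsup X).toReal :=
  EReal.toReal_coe (Ien ν) ▸ EReal.toReal_le_toReal
    (le_iSup (fun μ : {μ : SignedMeasure X // μ Set.univ = 1} => (Ien μ.1 : EReal)) ⟨ν, hν⟩)
    (EReal.coe_ne_bot _) hM.ne

variable [CompactSpace X] [BorelSpace X]

theorem integrable_of_continuous {f : X → ℝ} (hf : Continuous f) (m : Measure X)
    [IsFiniteMeasure m] : Integrable f m :=
  hf.integrable_of_hasCompactSupport (HasCompactSupport.of_compactSpace f)

theorem integral_posPart_sub_integral_negPart (μ : SignedMeasure X) {f : X → ℝ}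
    (hf : Continuous f) :
    (∫ x, f x ∂μ.toJordanDecomposition.posPart) - (∫ x, f x ∂μ.toJordanDecomposition.negPart)
      = ∫ᵛ x, f x ∂<•μ := by
  conv_rhs => rw [← μ.toSignedMeasure_toJordanDecomposition]
  rw [JordanDecomposition.toSignedMeasure, VectorMeasure.integral_sub_vectorMeasure,
    VectorMeasure.integral_toSignedMeasure, VectorMeasure.integral_toSignedMeasure]
  all_goals simpa using integrable_of_continuous hf _

theorem continuous_integral_dist (m : Measure X) [IsFiniteMeasure m] :
    Continuous fun x => ∫ y, dist x y ∂m := by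
  simpa using continuous_parametric_integral_of_continuous (μ := m) continuous_dist isCompact_univ

theorem continuous_dmu (ν : SignedMeasure X) : Continuous (dmu ν) :=
  (continuous_integral_dist _).sub (continuous_integral_dist _)

theorem dmu_eq_integral (ν : SignedMeasure X) (x : X) : dmu ν x = ∫ᵛ y, dist x y ∂<•ν :=
  integral_posPart_sub_integral_negPart ν (continuous_const.dist continuous_id)

theorem Ibil_eq_integral (μ ν : SignedMeasure X) : Ibil μ ν = ∫ᵛ x, dmu ν x ∂<•μ :=
  integral_posPart_sub_integral_negPart μ (continuous_dmu ν)

theorem Ibil_add_left (μ μ' ν : SignedMeasure X) : Ibil (μ + μ') ν = Ibil μ ν + Ibil μ' ν := by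
  simp only [Ibil_eq_integral]
  exact VectorMeasure.integral_add_vectorMeasure (integrable_of_continuous (continuous_dmu ν) _)
    (integrable_of_continuous (continuous_dmu ν) _)

theorem Ibil_smul_left (c : ℝ) (μ ν : SignedMeasure X) : Ibil (c • μ) ν = c * Ibil μ ν := by
  simp only [Ibil_eq_integral]
  exact VectorMeasure.integral_smul_vectorMeasure _ c

theorem dmu_add (ν ν' : SignedMeasure X) : dmu (ν + ν') = dmu ν + dmu ν' := by
  ext x
  simp only [dmu_eq_integral, Pi.add_apply]
  exact VectorMeasure.integral_add_vectorMeasure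
    (integrable_of_continuous (continuous_const.dist continuous_id) _)
    (integrable_of_continuous (continuous_const.dist continuous_id) _)

theorem dmu_smul (c : ℝ) (ν : SignedMeasure X) : dmu (c • ν) = c • dmu ν := by
  ext x
  simp only [dmu_eq_integral, Pi.smul_apply]
  exact VectorMeasure.integral_smul_vectorMeasure _ c

theorem Ibil_add_right (μ ν ν' : SignedMeasure X) : Ibil μ (ν + ν') = Ibil μ ν + Ibil μ ν' := by
  simp only [Ibil_eq_integral, dmu_add]
  exact VectorMeasure.integral_add (integrable_of_continuous (continuous_dmu ν) _)
    (integrable_of_continuous (continuous_dmu ν') _)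

theorem Ibil_smul_right (c : ℝ) (μ ν : SignedMeasure X) : Ibil μ (c • ν) = c * Ibil μ ν := by
  simp only [Ibil_eq_integral, dmu_smul]
  exact VectorMeasure.integral_smul _ _ _ c

theorem Ibil_dirac_left (x : X) (ν : SignedMeasure X) :
    Ibil (Measure.dirac x).toSignedMeasure ν = dmu ν x := by
  rw [Ibil_eq_integral, VectorMeasure.integral_toSignedMeasure, integral_dirac]

theorem dmu_dirac (x : X) : dmu (Measure.dirac x).toSignedMeasure = fun y => dist y x := by
  ext y
  rw [dmu_eq_integral, VectorMeasure.integral_toSignedMeasure, integral_dirac]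

theorem Ibil_dirac_right (μ : SignedMeasure X) (x : X) :
    Ibil μ (Measure.dirac x).toSignedMeasure = dmu μ x := by
  rw [Ibil_eq_integral, dmu_dirac, dmu_eq_integral]
  simp_rw [dist_comm x]

/-- The semi-inner product of `E(X)`, with the constant `M(X)` replaced by a parameter `M`. -/
noncomputable def eInner (M : ℝ) : LinearMap.BilinForm ℝ (SignedMeasure X) :=
  LinearMap.mk₂ ℝ (fun μ ν => (M + 1) * (μ Set.univ * ν Set.univ) - Ibil μ ν)
    (fun μ μ' ν => by simp only [add_apply, Ibil_add_left]; ring)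
    (fun c μ ν => by simp only [smul_apply, Ibil_smul_left, smul_eq_mul]; ring)
    (fun μ ν ν' => by simp only [add_apply, Ibil_add_right]; ring)
    (fun c μ ν => by simp only [smul_apply, Ibil_smul_right, smul_eq_mul]; ring)

theorem eInner_apply (M : ℝ) (μ ν : SignedMeasure X) :
    eInner M μ ν = (M + 1) * (μ Set.univ * ν Set.univ) - Ibil μ ν := rfl

theorem eInner_self (M : ℝ) (μ : SignedMeasure X) :
    eInner M μ μ = (M + 1) * μ Set.univ ^ 2 - Ien μ := by
  rw [eInner_apply, Ien, sq]

theorem Ien_le_mul_sq {M : ℝ} (hq : ∀ ν : SignedMeasure X, ν Set.univ = 0 → Ien ν ≤ 0)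
    (hM : ∀ ν : SignedMeasure X, ν Set.univ = 1 → Ien ν ≤ M) (μ : SignedMeasure X) :
    Ien μ ≤ M * μ Set.univ ^ 2 := by
  set c := μ Set.univ with hc
  rcases eq_or_ne c 0 with hc0 | hc0
  · simpa [hc0] using hq μ hc0
  have hunit : (c⁻¹ • μ) Set.univ = 1 := by
    rw [smul_apply, smul_eq_mul, ← hc, inv_mul_cancel₀ hc0]
  have hscale : Ien (c⁻¹ • μ) = (c ^ 2)⁻¹ * Ien μ := by
    rw [Ien, Ibil_smul_left, Ibil_smul_right, Ien]; ring
  have := hM _ hunit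
  rw [hscale, inv_mul_le_iff₀ (by positivity)] at this
  linarith

theorem sq_univ_le_eInner_self {M : ℝ} (hM : ∀ μ : SignedMeasure X, Ien μ ≤ M * μ Set.univ ^ 2)
    (μ : SignedMeasure X) : μ Set.univ ^ 2 ≤ eInner M μ μ := by
  rw [eInner_self]; linarith [hM μ]

theorem eInner_dirac_left (M : ℝ) (x : X) (μ : SignedMeasure X) :
    eInner M (Measure.dirac x).toSignedMeasure μ = (M + 1) * μ Set.univ - dmu μ x := by
  rw [eInner_apply, Ibil_dirac_left, dirac_toSignedMeasure_univ, one_mul]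

theorem eInner_dirac_right (M : ℝ) (μ : SignedMeasure X) (x : X) :
    eInner M μ (Measure.dirac x).toSignedMeasure = (M + 1) * μ Set.univ - dmu μ x := by
  rw [eInner_apply, Ibil_dirac_right, dirac_toSignedMeasure_univ, mul_one]

theorem eInner_dirac_dirac (M : ℝ) (x : X) :
    eInner M (Measure.dirac x).toSignedMeasure (Measure.dirac x).toSignedMeasure = M + 1 := by
  simp only [eInner_dirac_left, dirac_toSignedMeasure_univ, dmu_dirac, dist_self]; ring

theorem abs_univ_le_sqrt {M : ℝ} (hM : ∀ μ : SignedMeasure X, Ien μ ≤ M * μ Set.univ ^ 2)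
    (μ : SignedMeasure X) : |μ Set.univ| ≤ √((M + 1) * μ Set.univ ^ 2 - Ien μ) :=
  Real.abs_le_sqrt (eInner_self M μ ▸ sq_univ_le_eInner_self hM μ)

theorem abs_dmu_le {M : ℝ} (hM : ∀ μ : SignedMeasure X, Ien μ ≤ M * μ Set.univ ^ 2)
    (μ : SignedMeasure X) (x : X) :
    |dmu μ x| ≤ (M + 1 + √(M + 1)) * √((M + 1) * μ Set.univ ^ 2 - Ien μ) := by
  set δ := (Measure.dirac x).toSignedMeasure
  set s := √((M + 1) * μ Set.univ ^ 2 - Ien μ)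
  have hpos := eInner_dirac_dirac M x ▸ sq_univ_le_eInner_self hM δ
  rw [dirac_toSignedMeasure_univ, one_pow] at hpos
  have hcs := (eInner M).apply_mul_apply_le_of_forall_zero_le
    (fun ν => (sq_nonneg _).trans (sq_univ_le_eInner_self hM ν)) μ δ
  rw [eInner_dirac_right, eInner_dirac_left, eInner_dirac_dirac, ← sq, eInner_self] at hcs
  have hdiff : |(M + 1) * μ Set.univ - dmu μ x| ≤ s * √(M + 1) :=
    (Real.abs_le_sqrt hcs).trans_eq (Real.sqrt_mul' _ (by linarith))
  calc |dmu μ x| = |(M + 1) * μ Set.univ - ((M + 1) * μ Set.univ - dmu μ x)| := by ring_nf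
    _ ≤ |(M + 1) * μ Set.univ| + |(M + 1) * μ Set.univ - dmu μ x| := abs_sub _ _
    _ = (M + 1) * |μ Set.univ| + |(M + 1) * μ Set.univ - dmu μ x| := by
        rw [abs_mul, abs_of_nonneg (by linarith)]
    _ ≤ (M + 1) * s + s * √(M + 1) := by
        gcongr
        exact abs_univ_le_sqrt hM μ
    _ = (M + 1 + √(M + 1)) * s := by ring

end QuasihypermetricEnergy

open QuasihypermetricEnergy in
/-- For a compact quasihypermetric space with `M(X) < ∞`, writing
`‖μ‖_E = ((M(X)+1)·μ(X)² − I(μ))^{1/2}`: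
(1) `|μ(X)| ≤ ‖μ‖_E`, and (2) `‖d_μ‖_∞ ≤ (M(X)+1+(M(X)+1)^{1/2})·‖μ‖_E`. -/
theorem stmt_18 {X : Type*} [MetricSpace X] [CompactSpace X]
    [MeasurableSpace X] [BorelSpace X]
    (hq : ∀ ν : SignedMeasure X, ν Set.univ = 0 → Ien ν ≤ 0)
    (hM : MXsup X < ⊤) :
    (∀ μ : SignedMeasure X,
      |μ Set.univ| ≤
        Real.sqrt (((MXsup X).toReal + 1) * (μ Set.univ) ^ 2 - Ien μ)) ∧
    (∀ μ : SignedMeasure X, ∀ x : X,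
      |dmu μ x| ≤
        ((MXsup X).toReal + 1 + Real.sqrt ((MXsup X).toReal + 1)) *
          Real.sqrt (((MXsup X).toReal + 1) * (μ Set.univ) ^ 2 - Ien μ)) := by
  have hI := Ien_le_mul_sq hq fun _ => Ien_le_MXsup_toReal hM
  exact ⟨abs_univ_le_sqrt hI, abs_dmu_le hI⟩
end
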